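/- Let e₁ and e₂ be real numbers with 0 < e₂ < e₁ < 1. Then ∫_{e₂}^{e₁} √((e₁² − q²)(q² − e₂²)) / (q·(1 − q²)) dq = (π/2) · [ 1 − e₁ e₂ − √((1 − e₁²)(1 − e₂²)) ]. -/

import Mathlib

open Real intervalIntegral

/-- Incomplete elliptic integral of the first kind `F(φ, k)`. -/
noncomputable def ellipticF (φ k : ℝ) : ℝ :=
  ∫ θ in (0:ℝ)..φ, (1 - k ^ 2 * Real.sin θ ^ 2) ^ (-(1:ℝ)/2)

/-- Incomplete elliptic integral of the second kind `E(φ, k)`. -/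
noncomputable def ellipticE (φ k : ℝ) : ℝ :=
  ∫ θ in (0:ℝ)..φ, (1 - k ^ 2 * Real.sin θ ^ 2) ^ ((1:ℝ)/2)

/-- Complete elliptic integral of the first kind `K(k)`. -/
noncomputable def completeK (k : ℝ) : ℝ := ellipticF (Real.pi / 2) k

/-- Complete elliptic integral of the second kind `E(k)`. -/
noncomputable def completeE (k : ℝ) : ℝ := ellipticE (Real.pi / 2) k

/-- Inverse hyperbolic tangent. -/
noncomputable def arctanh (x : ℝ) : ℝ := Real.log ((1 + x) / (1 - x)) / 2

set_option maxHeartbeats 1000000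


noncomputable def G (a b q : ℝ) : ℝ :=
  (Real.arcsin ((2*q^2 - (a^2 + b^2)) / (a^2 - b^2))
   - a*b * Real.arcsin (((a^2 + b^2)*q^2 - 2*(a^2*b^2)) / ((a^2 - b^2)*q^2))
   + Real.sqrt ((1-a^2)*(1-b^2)) *
     Real.arcsin (((2 - (a^2 + b^2))*(1-q^2) - 2*((1-a^2)*(1-b^2))) / ((a^2 - b^2)*(1-q^2)))) / 2

lemma G_deriv {a b q : ℝ} (hb : 0 < b) (h1 : b < q) (h2 : q < a) (ha : a < 1) :
    HasDerivAt (G a b) (Real.sqrt ((a^2 - q^2)*(q^2 - b^2)) / (q*(1-q^2))) q := by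
  have hq0 : 0 < q := hb.trans h1
  have hq1 : q < 1 := h2.trans ha
  have hD : 0 < a^2 - b^2 := by nlinarith
  have hA : q^2 < a^2 := by nlinarith
  have hB : b^2 < q^2 := by nlinarith
  have h1q : 0 < 1 - q^2 := by nlinarith
  have ha2 : a^2 < 1 := by nlinarith
  have hb2 : b^2 < 1 := by nlinarith
  set R := Real.sqrt ((a^2 - q^2)*(q^2 - b^2)) with hRdef
  have hRpos : 0 < R := Real.sqrt_pos.2 (by nlinarith)
  have hR2 : R^2 = (a^2 - q^2)*(q^2 - b^2) := Real.sq_sqrt (by nlinarith)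
  have hDne : (a^2 - b^2) ≠ 0 := ne_of_gt hD
  have hqne : q ≠ 0 := ne_of_gt hq0
  have h1qne : (1 - q^2) ≠ 0 := ne_of_gt h1q
  set c := Real.sqrt ((1-a^2)*(1-b^2)) with hcdef
  have hcpos : 0 < c := Real.sqrt_pos.2 (mul_pos (by linarith) (by linarith))
  have hc2 : c^2 = (1-a^2)*(1-b^2) := Real.sq_sqrt (le_of_lt (mul_pos (by linarith) (by linarith)))
  clear_value R c
  -- inner functions
  have hg1 : HasDerivAt (fun q : ℝ => (2*q^2 - (a^2 + b^2)) / (a^2 - b^2))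
      (4*q / (a^2 - b^2)) q := by
    have h := (((hasDerivAt_pow 2 q).const_mul (2:ℝ)).sub_const (a^2 + b^2)).div_const (a^2 - b^2)
    refine h.congr_deriv ?_
    ring
  have hg2 : HasDerivAt (fun q : ℝ => ((a^2 + b^2)*q^2 - 2*(a^2*b^2)) / ((a^2 - b^2)*q^2))
      (4*(a^2*b^2) / ((a^2 - b^2)*q^3)) q := by
    have hnum : HasDerivAt (fun q : ℝ => (a^2 + b^2)*q^2 - 2*(a^2*b^2))
        ((a^2+b^2)*(2*q)) q := by
      have h := ((hasDerivAt_pow 2 q).const_mul (a^2 + b^2)).sub_const (2*(a^2*b^2))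
      refine h.congr_deriv ?_; ring
    have hden : HasDerivAt (fun q : ℝ => (a^2 - b^2)*q^2) ((a^2-b^2)*(2*q)) q := by
      have h := (hasDerivAt_pow 2 q).const_mul (a^2 - b^2)
      refine h.congr_deriv ?_; ring
    have h := hnum.div hden (by positivity)
    refine h.congr_deriv ?_
    field_simp [hDne, hqne]
    ring
  have hg3 : HasDerivAt (fun q : ℝ =>
      ((2 - (a^2 + b^2))*(1-q^2) - 2*((1-a^2)*(1-b^2))) / ((a^2 - b^2)*(1-q^2)))
      (-(4*((1-a^2)*(1-b^2))*q) / ((a^2 - b^2)*(1-q^2)^2)) q := by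
    have hnum : HasDerivAt (fun q : ℝ => (2 - (a^2 + b^2))*(1-q^2) - 2*((1-a^2)*(1-b^2)))
        ((2 - (a^2+b^2))*(-(2*q))) q := by
      have h := ((((hasDerivAt_pow 2 q).const_sub 1)).const_mul (2 - (a^2+b^2))).sub_const
        (2*((1-a^2)*(1-b^2)))
      refine h.congr_deriv ?_; ring
    have hden : HasDerivAt (fun q : ℝ => (a^2 - b^2)*(1-q^2)) ((a^2-b^2)*(-(2*q))) q := by
      have h := ((hasDerivAt_pow 2 q).const_sub 1).const_mul (a^2 - b^2)
      refine h.congr_deriv ?_; ring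
    have h := hnum.div hden (by positivity)
    refine h.congr_deriv ?_
    field_simp [hDne, h1qne]
    ring
  -- bounds for arcsin args
  have hb1a : (2*q^2 - (a^2 + b^2)) / (a^2 - b^2) < 1 := by
    rw [div_lt_one hD]; nlinarith
  have hb1b : -1 < (2*q^2 - (a^2 + b^2)) / (a^2 - b^2) := by
    rw [lt_div_iff₀ hD]; nlinarith
  have hb2a : ((a^2 + b^2)*q^2 - 2*(a^2*b^2)) / ((a^2 - b^2)*q^2) < 1 := by
    rw [div_lt_one (mul_pos hD (by positivity))]
    nlinarith [mul_pos (pow_pos hb 2) (show (0:ℝ) < a^2 - q^2 by linarith)]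
  have hb2b : -1 < ((a^2 + b^2)*q^2 - 2*(a^2*b^2)) / ((a^2 - b^2)*q^2) := by
    rw [lt_div_iff₀ (mul_pos hD (by positivity))]
    nlinarith [mul_pos (pow_pos (show (0:ℝ) < a by linarith) 2) (show (0:ℝ) < q^2 - b^2 by linarith)]
  have hb3a : ((2 - (a^2 + b^2))*(1-q^2) - 2*((1-a^2)*(1-b^2))) / ((a^2 - b^2)*(1-q^2)) < 1 := by
    rw [div_lt_one (mul_pos hD h1q)]
    nlinarith [mul_pos (show (0:ℝ) < 1 - a^2 by linarith) (show (0:ℝ) < q^2 - b^2 by linarith)]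
  have hb3b : -1 < ((2 - (a^2 + b^2))*(1-q^2) - 2*((1-a^2)*(1-b^2))) / ((a^2 - b^2)*(1-q^2)) := by
    rw [lt_div_iff₀ (mul_pos hD h1q)]
    nlinarith [mul_pos (show (0:ℝ) < 1 - b^2 by linarith) (show (0:ℝ) < a^2 - q^2 by linarith)]
  -- sqrt simplifications
  have hs1 : Real.sqrt (1 - ((2*q^2 - (a^2 + b^2)) / (a^2 - b^2))^2)
      = 2*R/(a^2 - b^2) := by
    rw [show 1 - ((2*q^2 - (a^2 + b^2)) / (a^2 - b^2))^2 = (2*R/(a^2 - b^2))^2 by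
      rw [div_pow, div_pow, mul_pow, hR2]; field_simp; ring]
    exact Real.sqrt_sq (by positivity)
  have hs2 : Real.sqrt (1 - (((a^2 + b^2)*q^2 - 2*(a^2*b^2)) / ((a^2 - b^2)*q^2))^2)
      = 2*a*b*R/((a^2 - b^2)*q^2) := by
    rw [show 1 - (((a^2 + b^2)*q^2 - 2*(a^2*b^2)) / ((a^2 - b^2)*q^2))^2
        = (2*a*b*R/((a^2 - b^2)*q^2))^2 by
      rw [div_pow, div_pow, mul_pow (2*a*b) R, hR2]; field_simp; ring]
    have hab : 0 < a := hb.trans (h1.trans h2)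
    exact Real.sqrt_sq (by positivity)
  have hs3 : Real.sqrt (1 - (((2 - (a^2 + b^2))*(1-q^2) - 2*((1-a^2)*(1-b^2)))
        / ((a^2 - b^2)*(1-q^2)))^2)
      = 2*c*R/((a^2 - b^2)*(1-q^2)) := by
    rw [show 1 - (((2 - (a^2 + b^2))*(1-q^2) - 2*((1-a^2)*(1-b^2))) / ((a^2 - b^2)*(1-q^2)))^2
        = (2*c*R/((a^2 - b^2)*(1-q^2)))^2 by
      rw [div_pow, div_pow, mul_pow (2*c) R, hR2, mul_pow 2 c, hc2]; field_simp; ring]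
    exact Real.sqrt_sq (by positivity)
  -- assemble
  have H1 := (Real.hasDerivAt_arcsin (ne_of_gt hb1b) (ne_of_lt hb1a)).comp q hg1
  have H2 := (Real.hasDerivAt_arcsin (ne_of_gt hb2b) (ne_of_lt hb2a)).comp q hg2
  have H3 := (Real.hasDerivAt_arcsin (ne_of_gt hb3b) (ne_of_lt hb3a)).comp q hg3
  have H : HasDerivAt (G a b)
      ((1 / Real.sqrt (1 - ((2*q^2 - (a^2 + b^2)) / (a^2 - b^2))^2) * (4*q / (a^2 - b^2))
        - a*b * (1 / Real.sqrt (1 - (((a^2 + b^2)*q^2 - 2*(a^2*b^2)) / ((a^2 - b^2)*q^2))^2)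
            * (4*(a^2*b^2) / ((a^2 - b^2)*q^3)))
        + c * (1 / Real.sqrt (1 - (((2 - (a^2 + b^2))*(1-q^2) - 2*((1-a^2)*(1-b^2)))
            / ((a^2 - b^2)*(1-q^2)))^2)
            * (-(4*((1-a^2)*(1-b^2))*q) / ((a^2 - b^2)*(1-q^2)^2)))) / 2) q := by
    have H' := ((H1.sub (H2.const_mul (a*b))).add (H3.const_mul c)).div_const 2
    unfold G
    simp only [← hcdef]
    exact H'
  rw [hs1, hs2, hs3] at H
  refine H.congr_deriv ?_
  have hRne : R ≠ 0 := ne_of_gt hRpos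
  have hcne : c ≠ 0 := ne_of_gt hcpos
  have hane : a ≠ 0 := ne_of_gt (hb.trans (h1.trans h2))
  have hbne : b ≠ 0 := ne_of_gt hb
  field_simp
  linear_combination (-4) * hR2

lemma G_contAt {a b q : ℝ} (hD : a^2 - b^2 ≠ 0) (hq : q ≠ 0) (h1q : 1 - q^2 ≠ 0) :
    ContinuousAt (G a b) q := by
  unfold G
  have h1 : ContinuousAt (fun q : ℝ => (2*q^2 - (a^2 + b^2)) / (a^2 - b^2)) q := by fun_prop
  have h2 : ContinuousAt (fun q : ℝ => ((a^2 + b^2)*q^2 - 2*(a^2*b^2)) / ((a^2 - b^2)*q^2)) q :=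
    ContinuousAt.div (by fun_prop) (by fun_prop) (mul_ne_zero hD (pow_ne_zero 2 hq))
  have h3 : ContinuousAt (fun q : ℝ =>
      ((2 - (a^2 + b^2))*(1-q^2) - 2*((1-a^2)*(1-b^2))) / ((a^2 - b^2)*(1-q^2))) q :=
    ContinuousAt.div (by fun_prop) (by fun_prop) (mul_ne_zero hD h1q)
  exact (((Real.continuousAt_arcsin.comp h1).sub
    (continuousAt_const.mul (Real.continuousAt_arcsin.comp h2))).add
    (continuousAt_const.mul (Real.continuousAt_arcsin.comp h3))).div_const 2

lemma G_val_hi {a b : ℝ} (hb : 0 < b) (hba : b < a) (ha : a < 1) :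
    G a b a = Real.pi/4 * (1 - a*b - Real.sqrt ((1-a^2)*(1-b^2))) := by
  have hDne : a^2 - b^2 ≠ 0 := by nlinarith
  have hane : (a:ℝ)^2 ≠ 0 := pow_ne_zero 2 (ne_of_gt (hb.trans hba))
  have h1a : (1:ℝ) - a^2 ≠ 0 := by nlinarith
  unfold G
  rw [show (2*a^2 - (a^2 + b^2)) / (a^2 - b^2) = 1 by
      rw [div_eq_one_iff_eq hDne]; ring,
    show ((a^2 + b^2)*a^2 - 2*(a^2*b^2)) / ((a^2 - b^2)*a^2) = 1 by
      rw [div_eq_one_iff_eq (mul_ne_zero hDne hane)]; ring,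
    show ((2 - (a^2 + b^2))*(1-a^2) - 2*((1-a^2)*(1-b^2))) / ((a^2 - b^2)*(1-a^2)) = -1 by
      rw [div_eq_iff (mul_ne_zero hDne h1a)]; ring,
    Real.arcsin_one, Real.arcsin_neg_one]
  ring

lemma G_val_lo {a b : ℝ} (hb : 0 < b) (hba : b < a) (ha : a < 1) :
    G a b b = -(Real.pi/4) * (1 - a*b - Real.sqrt ((1-a^2)*(1-b^2))) := by
  have hDne : a^2 - b^2 ≠ 0 := by nlinarith
  have hbne : (b:ℝ)^2 ≠ 0 := pow_ne_zero 2 (by positivity)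
  have h1b : (1:ℝ) - b^2 ≠ 0 := by nlinarith
  unfold G
  rw [show (2*b^2 - (a^2 + b^2)) / (a^2 - b^2) = -1 by
      rw [div_eq_iff hDne]; ring,
    show ((a^2 + b^2)*b^2 - 2*(a^2*b^2)) / ((a^2 - b^2)*b^2) = -1 by
      rw [div_eq_iff (mul_ne_zero hDne hbne)]; ring,
    show ((2 - (a^2 + b^2))*(1-b^2) - 2*((1-a^2)*(1-b^2))) / ((a^2 - b^2)*(1-b^2)) = 1 by
      rw [div_eq_one_iff_eq (mul_ne_zero hDne h1b)]; ring,
    Real.arcsin_one, Real.arcsin_neg_one]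
  ring

theorem stmt_5 (e₁ e₂ : ℝ) (h0 : 0 < e₂) (h21 : e₂ < e₁) (h11 : e₁ < 1) :
    (∫ q in e₂..e₁,
        Real.sqrt ((e₁ ^ 2 - q ^ 2) * (q ^ 2 - e₂ ^ 2)) / (q * (1 - q ^ 2)))
      = Real.pi / 2 * (1 - e₁ * e₂ - Real.sqrt ((1 - e₁ ^ 2) * (1 - e₂ ^ 2))) := by
  have hint : IntervalIntegrable
      (fun q => Real.sqrt ((e₁ ^ 2 - q ^ 2) * (q ^ 2 - e₂ ^ 2)) / (q * (1 - q ^ 2)))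
      MeasureTheory.volume e₂ e₁ := by
    apply ContinuousOn.intervalIntegrable
    apply ContinuousOn.div (by fun_prop) (by fun_prop)
    intro x hx
    rw [Set.uIcc_of_le h21.le] at hx
    have hx1 : 0 < x := lt_of_lt_of_le h0 hx.1
    have hx2 : x < 1 := lt_of_le_of_lt hx.2 h11
    have : 0 < 1 - x^2 := by nlinarith
    positivity
  have hderiv : ∀ x ∈ Set.Ioo e₂ e₁, HasDerivAt (G e₁ e₂)
      (Real.sqrt ((e₁ ^ 2 - x ^ 2) * (x ^ 2 - e₂ ^ 2)) / (x * (1 - x ^ 2))) x :=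
    fun x hx => G_deriv h0 hx.1 hx.2 h11
  have ha : Filter.Tendsto (G e₁ e₂) (nhdsWithin e₂ (Set.Ioi e₂))
      (nhds (G e₁ e₂ e₂)) :=
    ((G_contAt (by nlinarith) (ne_of_gt h0) (by nlinarith)).tendsto).mono_left
      nhdsWithin_le_nhds
  have hb : Filter.Tendsto (G e₁ e₂) (nhdsWithin e₁ (Set.Iio e₁))
      (nhds (G e₁ e₂ e₁)) :=
    ((G_contAt (by nlinarith) (ne_of_gt (h0.trans h21)) (by nlinarith)).tendsto).mono_left
      nhdsWithin_le_nhds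
  rw [intervalIntegral.integral_eq_sub_of_hasDerivAt_of_tendsto h21 hderiv hint ha hb,
    G_val_hi h0 h21 h11, G_val_lo h0 h21 h11]
  ring
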